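/- Let c_P ∈ ℝⁿ solve (A + S κ J) c_P = g where κ is an N×N symmetric positive definite matrix, A symmetric positive definite, J = Sᵀ. As the smallest eigenvalue of κ tends to infinity (along κ = t κ₀ with t → ∞ and κ₀ symmetric positive definite), the solutions c_t converge to the solution c of the saddle-point problem A c + S λ = g, J c = 0, provided S has full column rank. -/

import Mathlib

/-!
The error `e = c_t - c` solves `(A + t S κ₀ Sᵀ) e = S λ`. Testing this with `e` gives
`eᵀ A e + t wᵀ κ₀ w = w ⬝ λ` for `w = Sᵀ e`. Positive definite matrices are coercive (their
quadratic forms attain a positive minimum on the compact unit sphere), so in the sup norm the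
left side is at least `α ‖e‖² + t μ ‖w‖²`, while `w ⬝ λ ≤ L ‖w‖` with `L = ∑ |λᵢ|`. Completing
the square in `‖w‖` yields `‖e‖² ≤ L² / (4 α μ t)`.
-/

open Matrix Filter Topology

theorem sq_le_div_of_add_mul_sq_le {α β L a b : ℝ} (hα : 0 < α) (hβ : 0 < β)
    (h : α * a ^ 2 + β * b ^ 2 ≤ L * b) : a ^ 2 ≤ L ^ 2 / (4 * α * β) := by
  rw [le_div_iff₀ (by positivity)]
  nlinarith [sq_nonneg (L - 2 * β * b)]

theorem tendsto_of_sq_norm_sub_le_div {E : Type*} [SeminormedAddCommGroup E] {f : ℝ → E} {c : E}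
    {C : ℝ} (h : ∀ᶠ t in atTop, ‖f t - c‖ ^ 2 ≤ C / t) : Tendsto f atTop (𝓝 c) := by
  have hsq : Tendsto (fun t ↦ ‖f t - c‖ ^ 2) atTop (𝓝 0) :=
    squeeze_zero' (.of_forall fun _ ↦ by positivity) h (tendsto_const_nhds.div_atTop tendsto_id)
  rw [tendsto_iff_norm_sub_tendsto_zero]
  simpa [Real.sqrt_sq (norm_nonneg _)] using hsq.sqrt

namespace Matrix

variable {m n : Type*} [Fintype m] [Fintype n]

theorem PosDef.exists_mul_sq_norm_le_dotProduct_mulVec {B : Matrix n n ℝ} (hB : B.PosDef) :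
    ∃ α > 0, ∀ x : n → ℝ, α * ‖x‖ ^ 2 ≤ x ⬝ᵥ (B *ᵥ x) := by
  set q : (n → ℝ) → ℝ := fun x ↦ x ⬝ᵥ (B *ᵥ x)
  have hq : ∀ (r : ℝ) x, q (r • x) = r ^ 2 * q x := fun r x ↦ by
    simp only [q, mulVec_smul, smul_dotProduct, dotProduct_smul, smul_eq_mul]; ring
  have hsphere : ∀ x : n → ℝ, x ≠ 0 → ‖x‖⁻¹ • x ∈ Metric.sphere (0 : n → ℝ) 1 := fun x hx ↦ by
    simp [norm_smul, norm_ne_zero_iff.mpr hx]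
  rcases (Metric.sphere (0 : n → ℝ) 1).eq_empty_or_nonempty with hempty | hne
  · refine ⟨1, one_pos, fun x ↦ ?_⟩
    obtain rfl : x = 0 := by
      by_contra hx
      simpa [hempty] using hsphere x hx
    simp
  have hcont : Continuous q :=
    continuous_id.dotProduct (continuous_const.matrix_mulVec continuous_id)
  obtain ⟨u, hu, hmin⟩ := (isCompact_sphere (0 : n → ℝ) 1).exists_isMinOn hne hcont.continuousOn
  have hu0 : u ≠ 0 := ne_zero_of_mem_unit_sphere ⟨u, hu⟩
  refine ⟨q u, hB.dotProduct_mulVec_pos hu0, fun x ↦ ?_⟩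
  rcases eq_or_ne x 0 with rfl | hx
  · simp [q]
  have hx' : ‖x‖ ≠ 0 := norm_ne_zero_iff.mpr hx
  calc q u * ‖x‖ ^ 2 ≤ q (‖x‖⁻¹ • x) * ‖x‖ ^ 2 := by gcongr; exact hmin (hsphere x hx)
    _ = q x := by rw [hq]; field_simp

theorem abs_dotProduct_le_norm_mul (v w : n → ℝ) : |v ⬝ᵥ w| ≤ ‖v‖ * ∑ i, |w i| := by
  rw [Finset.mul_sum]
  refine (Finset.abs_sum_le_sum_abs _ _).trans (Finset.sum_le_sum fun i _ ↦ ?_)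
  rw [abs_mul]
  gcongr
  exact norm_le_pi_norm v i

section Penalty

variable {A : Matrix n n ℝ} {K : Matrix m m ℝ} {S : Matrix n m ℝ}

theorem PosDef.add_smul_mul_mul_transpose (hA : A.PosDef) (hK : K.PosSemidef) {t : ℝ}
    (ht : 0 ≤ t) : (A + t • (S * K * Sᵀ)).PosDef := by
  simpa using hA.add_posSemidef ((hK.mul_mul_conjTranspose_same S).smul ht)

theorem dotProduct_add_smul_mul_mul_transpose_mulVec (t : ℝ) (e : n → ℝ) :
    e ⬝ᵥ ((A + t • (S * K * Sᵀ)) *ᵥ e) =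
      e ⬝ᵥ (A *ᵥ e) + t * ((Sᵀ *ᵥ e) ⬝ᵥ (K *ᵥ (Sᵀ *ᵥ e))) := by
  rw [add_mulVec, dotProduct_add, smul_mulVec, dotProduct_smul, ← mulVec_mulVec, ← mulVec_mulVec,
    dotProduct_mulVec e S, ← mulVec_transpose, smul_eq_mul]

theorem mulVec_nonsing_inv_mulVec_sub [DecidableEq n] {M : Matrix n n ℝ} (hM : IsUnit M)
    {c g v : n → ℝ} (hv : M *ᵥ c + v = g) : M *ᵥ (M⁻¹ *ᵥ g - c) = v := by
  rw [mulVec_sub, mulVec_mulVec, mul_nonsing_inv _ ((isUnit_iff_isUnit_det M).mp hM), one_mulVec,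
    ← hv, add_sub_cancel_left]

theorem exists_sq_norm_penalty_sub_le [DecidableEq n] (hA : A.PosDef) (hK : K.PosDef)
    {c g : n → ℝ} (hc : Sᵀ *ᵥ c = 0) (hsaddle : ∃ lam, A *ᵥ c + S *ᵥ lam = g) :
    ∃ C, ∀ t > 0, ‖(A + t • (S * K * Sᵀ))⁻¹ *ᵥ g - c‖ ^ 2 ≤ C / t := by
  obtain ⟨lam, hlam⟩ := hsaddle
  obtain ⟨α, hα, hAα⟩ := hA.exists_mul_sq_norm_le_dotProduct_mulVec
  obtain ⟨μ, hμ, hKμ⟩ := hK.exists_mul_sq_norm_le_dotProduct_mulVec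
  set L := ∑ i, |lam i|
  refine ⟨L ^ 2 / (4 * α * μ), fun t ht ↦ ?_⟩
  set M := A + t • (S * K * Sᵀ)
  set e := M⁻¹ *ᵥ g - c
  set w := Sᵀ *ᵥ e
  have hMc : M *ᵥ c = A *ᵥ c := by
    rw [add_mulVec, smul_mulVec, ← mulVec_mulVec, hc, mulVec_zero, smul_zero, add_zero]
  have he : M *ᵥ e = S *ᵥ lam :=
    mulVec_nonsing_inv_mulVec_sub (hA.add_smul_mul_mul_transpose hK.posSemidef ht.le).isUnit
      (hMc ▸ hlam)
  have henergy : e ⬝ᵥ (A *ᵥ e) + t * (w ⬝ᵥ (K *ᵥ w)) = w ⬝ᵥ lam := by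
    rw [← dotProduct_add_smul_mul_mul_transpose_mulVec, he, dotProduct_mulVec, ← mulVec_transpose]
  have hbound : α * ‖e‖ ^ 2 + t * μ * ‖w‖ ^ 2 ≤ L * ‖w‖ := by
    have := mul_le_mul_of_nonneg_left (hKμ w) ht.le
    nlinarith [hAα e, le_abs_self (w ⬝ᵥ lam), abs_dotProduct_le_norm_mul w lam]
  calc ‖e‖ ^ 2 ≤ L ^ 2 / (4 * α * (t * μ)) := sq_le_div_of_add_mul_sq_le hα (by positivity) hbound
    _ = L ^ 2 / (4 * α * μ) / t := by rw [div_div]; ring_nf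

end Penalty

end Matrix

theorem stmt_17_general {n N : ℕ}
    (A : Matrix (Fin n) (Fin n) ℝ) (hA : A.PosDef)
    (κ₀ : Matrix (Fin N) (Fin N) ℝ) (hκ₀ : κ₀.PosDef)
    (S : Matrix (Fin n) (Fin N) ℝ)
    (g c : Fin n → ℝ)
    (hconstraint : Sᵀ *ᵥ c = 0)
    (hsaddle : ∃ lam : Fin N → ℝ, A *ᵥ c + S *ᵥ lam = g) :
    Tendsto (fun t : ℝ => (A + t • (S * κ₀ * Sᵀ))⁻¹ *ᵥ g) atTop (nhds c) := by
  obtain ⟨C, hC⟩ := exists_sq_norm_penalty_sub_le hA hκ₀ hconstraint hsaddle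
  exact tendsto_of_sq_norm_sub_le_div ((eventually_gt_atTop 0).mono hC)

theorem stmt_17 {n N : ℕ}
    (A : Matrix (Fin n) (Fin n) ℝ) (hA : A.PosDef)
    (κ₀ : Matrix (Fin N) (Fin N) ℝ) (hκ₀ : κ₀.PosDef)
    (S : Matrix (Fin n) (Fin N) ℝ)
    (hS : ∀ v : Fin N → ℝ, S *ᵥ v = 0 → v = 0)
    (g c : Fin n → ℝ)
    (hconstraint : Sᵀ *ᵥ c = 0)
    (hsaddle : ∃ lam : Fin N → ℝ, A *ᵥ c + S *ᵥ lam = g) :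
    Tendsto (fun t : ℝ => (A + t • (S * κ₀ * Sᵀ))⁻¹ *ᵥ g) atTop (nhds c) :=
  stmt_17_general A hA κ₀ hκ₀ S g c hconstraint hsaddle
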